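/- Let A be an abelian category, (U,V) a t-structure on D^b(A) with heart H(U), and let f: A → B[n] be a morphism in D^b(A) with A,B ∈ H(U) and n ≥ 2. Then: (i) there exists an epimorphism C → A in H(U) such that the composite C → A → B[n] is zero if and only if there exists A_1 ∈ H(U) and a factorization of f as A → A_1[1] → B[n]; and (ii) there exists a monomorphism B → C in H(U) such that the composite A → B[n] → C[n] is zero if and only if there exists A_{n-1} ∈ H(U) and a factorization of f as A → A_{n-1}[n-1] → B[n]. -/

import Mathlib

/-!
Common definitions for formalizing statements from
"Derived equivalences for hereditary algebras: the role of the Serre functor".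
-/

noncomputable section

open CategoryTheory CategoryTheory.Limits CategoryTheory.Pretriangulated

universe w₁ v₁ u₁ w v u

namespace Paper

variable (D : Type u) [Category.{v} D]

/-- An object of a preadditive category is indecomposable if it is nonzero and any
biproduct decomposition `X ≅ Y ⊞ Z` has `Y = 0` or `Z = 0` (expressed elementarily). -/
def IndecomposableObj [Preadditive D] (X : D) : Prop :=
  ¬ IsZero X ∧
    ∀ (Y Z : D) (i : Y ⟶ X) (p : X ⟶ Y) (j : Z ⟶ X) (q : X ⟶ Z),
      i ≫ p = 𝟙 Y → j ≫ q = 𝟙 Z → i ≫ q = 0 → j ≫ p = 0 → p ≫ i + q ≫ j = 𝟙 X →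
        IsZero Y ∨ IsZero Z

/-- A morphism `f : A ⟶ C` is right minimal if any `h : A ⟶ A` with `h ≫ f = f`
is an automorphism. -/
def RightMinimal {A C : D} (f : A ⟶ C) : Prop :=
  ∀ h : A ⟶ A, h ≫ f = f → IsIso h

/-- The equivalence relation `f ∼_C g` on morphisms with target `C`. -/
def EquivOver {A B C : D} (f : A ⟶ C) (g : B ⟶ C) : Prop :=
  (∃ h₁ : A ⟶ B, h₁ ≫ g = f) ∧ (∃ h₂ : B ⟶ A, h₂ ≫ f = g)

section Serre

variable (k : Type u₁) [Field k] [Preadditive D] [CategoryTheory.Linear k D]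

/-- A Serre functor on a `k`-linear category `D`: an autoequivalence `F` together with
isomorphisms `Hom(X,Y) ≅ Hom(Y, F X)*`, natural in `X` and `Y`. -/
structure SerreFunctor where
  F : D ⥤ D
  isEquivalence : F.IsEquivalence
  η : ∀ X Y : D, (X ⟶ Y) ≃ₗ[k] Module.Dual k (Y ⟶ F.obj X)
  naturality_left : ∀ ⦃X' X Y : D⦄ (u : X' ⟶ X) (f : X ⟶ Y) (g : Y ⟶ F.obj X'),
    η X' Y (u ≫ f) g = η X Y f (g ≫ F.map u)
  naturality_right : ∀ ⦃X Y Y' : D⦄ (f : X ⟶ Y) (v : Y ⟶ Y') (g : Y' ⟶ F.obj X),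
    η X Y' (f ≫ v) g = η X Y f (v ≫ g)

/-- A Serre functor on the strictly full subcategory of `D` whose objects are `S`;
the Hom-spaces are the ambient ones. -/
structure SerreFunctorOn (S : Set D) where
  F : ObjectProperty.FullSubcategory (· ∈ S) ⥤ ObjectProperty.FullSubcategory (· ∈ S)
  isEquivalence : F.IsEquivalence
  η : ∀ X Y : ObjectProperty.FullSubcategory (· ∈ S),
    (X.obj ⟶ Y.obj) ≃ₗ[k] Module.Dual k (Y.obj ⟶ (F.obj X).obj)
  naturality_left : ∀ ⦃X' X Y : ObjectProperty.FullSubcategory (· ∈ S)⦄ (u : X' ⟶ X) (f : X.obj ⟶ Y.obj)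
      (g : Y.obj ⟶ (F.obj X').obj),
    η X' Y ((u.hom) ≫ f) g
      = η X Y f (g ≫ (F.map u).hom)
  naturality_right : ∀ ⦃X Y Y' : ObjectProperty.FullSubcategory (· ∈ S)⦄ (f : X.obj ⟶ Y.obj) (v : Y ⟶ Y')
      (g : Y'.obj ⟶ (F.obj X).obj),
    η X Y' (f ≫ v.hom) g = η X Y f (v.hom ≫ g)

end Serre

section Triangulated

variable [HasZeroObject D] [Preadditive D] [HasShift D ℤ]
  [∀ n : ℤ, (shiftFunctor D n).Additive] [Pretriangulated D]

/-- A t-structure on the strictly full (pretriangulated) subcategory of `D` with objects `S`: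
a pair `(U, V)` of strictly full subcategories with `U[1] ⊆ U`, `V ⊆ V[1]`,
`Hom(U[1], V) = 0`, and truncation triangles for every object of `S`. -/
structure TStructureOn (S : Set D) where
  U : Set D
  V : Set D
  U_subset : U ⊆ S
  V_subset : V ⊆ S
  U_iso : ∀ ⦃X Y : D⦄, (X ≅ Y) → X ∈ U → Y ∈ U
  V_iso : ∀ ⦃X Y : D⦄, (X ≅ Y) → X ∈ V → Y ∈ V
  U_shift : ∀ ⦃X : D⦄, X ∈ U → X⟦(1 : ℤ)⟧ ∈ U
  V_shift : ∀ ⦃X : D⦄, X ∈ V → X⟦(-1 : ℤ)⟧ ∈ V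
  hom_zero : ∀ ⦃X Y : D⦄, X ∈ U → Y ∈ V → ∀ f : X⟦(1 : ℤ)⟧ ⟶ Y, f = 0
  exists_triangle : ∀ C₀ ∈ S, ∃ (X Y : D) (_ : X ∈ U) (_ : Y⟦(1 : ℤ)⟧ ∈ V)
    (f : X ⟶ C₀) (g : C₀ ⟶ Y) (h : Y ⟶ X⟦(1 : ℤ)⟧), Triangle.mk f g h ∈ distTriang D

namespace TStructureOn

variable {D} {S : Set D} (t : TStructureOn D S)

/-- The heart of a t-structure, as a set of objects. -/
def heartSet : Set D := t.U ∩ t.V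

/-- The heart of a t-structure, as a (full sub)category. -/
abbrev Heart := ObjectProperty.FullSubcategory (· ∈ t.heartSet)

/-- The inclusion of the heart into the ambient category. -/
def heartIncl : t.Heart ⥤ D := ObjectProperty.ι _

/-- A t-structure is bounded if every object of the (sub)category lies in some shift
of the aisle and in some shift of the coaisle. -/
def IsBounded : Prop :=
  (∀ X ∈ S, ∃ n : ℤ, X⟦n⟧ ∈ t.U) ∧ (∀ X ∈ S, ∃ n : ℤ, X⟦n⟧ ∈ t.V)

end TStructureOn

/-- The aisle `U` of a t-structure is stable under a Serre functor on the ambient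
(sub)category. -/
def SerreStable (k : Type u₁) [Field k] [CategoryTheory.Linear k D] {S : Set D}
    (Se : SerreFunctorOn D k S) (U : Set D) : Prop :=
  ∀ X : ObjectProperty.FullSubcategory (· ∈ S), X.obj ∈ U → (Se.F.obj X).obj ∈ U

/-- A preaisle in the strictly full subcategory of `D` with objects `S`: a strictly full
subcategory closed under suspension and extensions. -/
def IsPreaisleOn (S P : Set D) : Prop :=
  P ⊆ S ∧ (∀ ⦃X Y : D⦄, (X ≅ Y) → X ∈ P → Y ∈ P) ∧ (∀ ⦃X : D⦄, X ∈ P → X⟦(1 : ℤ)⟧ ∈ P) ∧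
    (∀ T : Triangle D, (T ∈ distTriang D) → T.obj₁ ∈ P → T.obj₃ ∈ P → T.obj₂ ∈ S → T.obj₂ ∈ P)

/-- The smallest preaisle (in the subcategory with objects `S`) containing `E`. -/
def preaisleGenOn (S : Set D) (E : D) : Set D :=
  ⋂₀ {P : Set D | IsPreaisleOn D S P ∧ E ∈ P}

/-- A thick (triangulated, retract-closed) subcategory of the subcategory with objects `S`. -/
def IsThickOn (S P : Set D) : Prop :=
  P ⊆ S ∧ (∀ ⦃X Y : D⦄, (X ≅ Y) → X ∈ P → Y ∈ P) ∧
    (∀ ⦃X : D⦄, X ∈ P → X⟦(1 : ℤ)⟧ ∈ P ∧ X⟦(-1 : ℤ)⟧ ∈ P) ∧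
    (∀ T : Triangle D, (T ∈ distTriang D) → T.obj₁ ∈ P → T.obj₃ ∈ P → T.obj₂ ∈ S → T.obj₂ ∈ P) ∧
    (∀ ⦃X Y : D⦄, X ∈ P → Y ∈ S → ∀ (i : Y ⟶ X) (r : X ⟶ Y), i ≫ r = 𝟙 Y → Y ∈ P)

/-- The smallest thick subcategory (of the subcategory with objects `S`) containing `E`. -/
def thickGenOn (S : Set D) (E : D) : Set D :=
  ⋂₀ {P : Set D | IsThickOn D S P ∧ E ∈ P}

/-- `E` is a partial silting object: `Hom(E, E[n]) = 0` for `n > 0`. -/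
def IsPartialSilting (S : Set D) (E : D) : Prop :=
  E ∈ S ∧ ∀ n : ℤ, 0 < n → ∀ f : E ⟶ E⟦n⟧, f = 0

/-- `E` is a silting object: partial silting and it generates the category as a thick
subcategory. -/
def IsSilting (S : Set D) (E : D) : Prop :=
  IsPartialSilting D S E ∧ thickGenOn D S E = S

/-- `E` is a partial tilting object: `Hom(E, E[n]) = 0` for `n ≠ 0`. -/
def IsPartialTilting (S : Set D) (E : D) : Prop :=
  E ∈ S ∧ ∀ n : ℤ, n ≠ 0 → ∀ f : E ⟶ E⟦n⟧, f = 0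

/-- `E` is a tilting object: partial tilting and it generates the category as a thick
subcategory. -/
def IsTilting (S : Set D) (E : D) : Prop :=
  IsPartialTilting D S E ∧ thickGenOn D S E = S

/-- The aisle `U` of the t-structure `t` is finitely generated: it is the smallest
preaisle containing some partial silting object. -/
def TStructureOn.FinitelyGenerated {D : Type u} [Category.{v} D] [HasZeroObject D]
    [Preadditive D] [HasShift D ℤ] [∀ n : ℤ, (shiftFunctor D n).Additive] [Pretriangulated D]
    {S : Set D} (t : TStructureOn D S) : Prop :=
  ∃ E : D, IsPartialSilting D S E ∧ t.U = preaisleGenOn D S E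

/-- A torsion class in the abelian category whose objects are `H` (the heart of a
t-structure on `D`, where short exact sequences correspond to distinguished triangles):
a strictly full subcategory closed under extensions and quotients, such that the
inclusion admits a right adjoint (expressed pointwise). -/
def IsTorsionClassOn (H T : Set D) : Prop :=
  T ⊆ H ∧ (∀ ⦃X Y : D⦄, (X ≅ Y) → X ∈ T → Y ∈ T) ∧
    (∀ Tr : Triangle D, (Tr ∈ distTriang D) → Tr.obj₁ ∈ T → Tr.obj₃ ∈ T → Tr.obj₂ ∈ H →
      Tr.obj₂ ∈ T) ∧
    (∀ Tr : Triangle D, (Tr ∈ distTriang D) → Tr.obj₁ ∈ H → Tr.obj₂ ∈ T → Tr.obj₃ ∈ H →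
      Tr.obj₃ ∈ T) ∧
    (∀ X ∈ H, ∃ (TX : D) (_ : TX ∈ T) (c : TX ⟶ X),
      ∀ (Y : D), Y ∈ T → ∀ φ : Y ⟶ X, ∃! ψ : Y ⟶ TX, ψ ≫ c = φ)

/-- A tilting torsion class: a torsion class such that every object of the heart embeds
(in the heart) into an object of the torsion class. -/
def IsTiltingTorsionClassOn (H T : Set D) : Prop :=
  IsTorsionClassOn D H T ∧ ∀ (X : D) (hX : X ∈ H), ∃ (T' : D) (_ : T' ∈ T) (hT'H : T' ∈ H)
    (f : X ⟶ T'), Mono (ObjectProperty.homMk f : (⟨X, hX⟩ : ObjectProperty.FullSubcategory (· ∈ H)) ⟶ ⟨T', hT'H⟩)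

end Triangulated

section Db

variable (A : Type u) [Category.{v} A] [Abelian A] [HasDerivedCategory.{w} A]

/-- The objects of the bounded derived category `D^b(A)`, i.e. the objects of the
derived category of `A` with bounded cohomology. -/
def Bdd : Set (DerivedCategory A) :=
  {X | ∃ a b : ℤ, ∀ n : ℤ, (n < a ∨ b < n) →
    IsZero ((DerivedCategory.homologyFunctor A n).obj X)}

lemma shift_mem_Bdd {X : DerivedCategory A} (hX : X ∈ Bdd A) (m : ℤ) : X⟦m⟧ ∈ Bdd A := by
  obtain ⟨a, b, h⟩ := hX
  refine ⟨a - m, b - m, fun n hn => ?_⟩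
  exact IsZero.of_iso (h (m + n) (by omega))
    (((DerivedCategory.homologyFunctor A 0).shiftIso m n (m + n) rfl).app X)

/-- The canonical functor `A ⥤ D^b(A) ⊆ D(A)`, sending an object to the corresponding
complex concentrated in degree `0`. -/
def singleQ : A ⥤ DerivedCategory A :=
  HomologicalComplex.single A (ComplexShape.up ℤ) 0 ⋙ DerivedCategory.Q

lemma singleQ_obj_mem_Bdd (M : A) : (singleQ A).obj M ∈ Bdd A := by
  refine ⟨0, 0, fun n hn => ?_⟩
  refine IsZero.of_iso ?_
    ((DerivedCategory.homologyFunctorFactors A n).app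
      ((HomologicalComplex.single A (ComplexShape.up ℤ) 0).obj M))
  exact HomologicalComplex.isZero_single_obj_homology _ _ M n (by omega)

/-- The bounded derived category of `A`, as the full subcategory of `D(A)` whose objects
have bounded cohomology. -/
abbrev BddCat := ObjectProperty.FullSubcategory (· ∈ Bdd A)

/-- The suspension functor on the bounded derived category. -/
def bddShift : BddCat A ⥤ BddCat A :=
  ObjectProperty.lift _ (ObjectProperty.ι _ ⋙ shiftFunctor (DerivedCategory A) (1 : ℤ))
    (fun X => shift_mem_Bdd A X.property 1)

/-- The canonical functor `A ⥤ D^b(A)`. -/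
def bddSingle : A ⥤ BddCat A :=
  ObjectProperty.lift _ (singleQ A) (singleQ_obj_mem_Bdd A)

/-- `A` has global dimension at most `d`: `Ext^n(M, N) = 0` for all `n > d`
(expressed via morphisms in the derived category). -/
def HasGlobalDimensionLE (d : ℕ) : Prop :=
  ∀ (M N : A) (n : ℤ), (d : ℤ) < n → ∀ f : (singleQ A).obj M ⟶ ((singleQ A).obj N)⟦n⟧, f = 0

/-- An abelian category is hereditary if `Ext²(-, -) = 0` (equivalently, it has global
dimension at most `1`). -/
def IsHereditaryCat : Prop := HasGlobalDimensionLE A 1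

/-- `A` is Ext-finite over `k`: all Ext-spaces between objects of `A` are
finite-dimensional over `k`. -/
def ExtFinite (k : Type u₁) [Field k] [CategoryTheory.Linear k (DerivedCategory A)] : Prop :=
  ∀ (M N : A) (n : ℤ),
    FiniteDimensional k ((singleQ A).obj M ⟶ ((singleQ A).obj N)⟦n⟧)

/-- The Grothendieck group `K₀` of an abelian category. -/
def K0 : Type u :=
  FreeAbelianGroup (Quotient (isIsomorphicSetoid A)) ⧸
    AddSubgroup.closure {x | ∃ Sc : ShortComplex A, Sc.ShortExact ∧
      x = FreeAbelianGroup.of (Quotient.mk (isIsomorphicSetoid A) Sc.X₂)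
        - FreeAbelianGroup.of (Quotient.mk (isIsomorphicSetoid A) Sc.X₁)
        - FreeAbelianGroup.of (Quotient.mk (isIsomorphicSetoid A) Sc.X₃)}

/-- The class of an object of `A` in `K₀(A)`. -/
def K0cls (M : A) : K0 A :=
  QuotientAddGroup.mk (FreeAbelianGroup.of (Quotient.mk (isIsomorphicSetoid A) M))

/-- `D^b(A)` is discrete: for every function `v : ℤ → K₀(A)` there are only finitely many
isomorphism classes of bounded objects `X` with `[H^i(X)] = v i` for all `i`. -/
def DerivedDiscrete : Prop :=
  ∀ v : ℤ → K0 A,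
    Set.Finite {c : Quotient (isIsomorphicSetoid (BddCat A)) |
      ∃ X : BddCat A, Quotient.mk (isIsomorphicSetoid (BddCat A)) X = c ∧
        ∀ i : ℤ, K0cls A ((DerivedCategory.homologyFunctor A i).obj X.obj) = v i}

end Db

/-- The property that the inclusion `ι : H ⟶ D` of a (heart-like) abelian subcategory
of the triangulated category `D` lifts to a triangulated equivalence from `D^b(H)` to
the strictly full subcategory of `D` with objects `S`. -/
structure DbEquivalence (H : Type u₁) [Category.{v₁} H] [Abelian H] [HasDerivedCategory.{w₁} H]
    (D : Type u) [Category.{v} D] [HasZeroObject D] [Preadditive D] [HasShift D ℤ]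
    [∀ n : ℤ, (shiftFunctor D n).Additive] [Pretriangulated D]
    (S : Set D) (ι : H ⥤ D) where
  /-- the underlying functor `D^b(H) ⥤ D` -/
  F : BddCat H ⥤ D
  mem : ∀ X : BddCat H, F.obj X ∈ S
  /-- `F` commutes with the suspension -/
  commShift : bddShift H ⋙ F ≅ F ⋙ shiftFunctor D (1 : ℤ)
  /-- `F` sends distinguished triangles of `D^b(H)` to distinguished triangles of `D` -/
  map_distinguished : ∀ (T : Triangle (DerivedCategory H)) (_ : T ∈ distTriang (DerivedCategory H))
      (h₁ : T.obj₁ ∈ Bdd H) (h₂ : T.obj₂ ∈ Bdd H) (h₃ : T.obj₃ ∈ Bdd H),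
      Triangle.mk (F.map (X := ⟨T.obj₁, h₁⟩) (Y := ⟨T.obj₂, h₂⟩) (ObjectProperty.homMk T.mor₁))
        (F.map (X := ⟨T.obj₂, h₂⟩) (Y := ⟨T.obj₃, h₃⟩) (ObjectProperty.homMk T.mor₂))
        (F.map (X := ⟨T.obj₃, h₃⟩) (Y := (bddShift H).obj ⟨T.obj₁, h₁⟩) (ObjectProperty.homMk T.mor₃) ≫
          commShift.hom.app ⟨T.obj₁, h₁⟩) ∈ distTriang D
  faithful : F.Faithful
  full : F.Full
  /-- `F` is essentially surjective onto the subcategory with objects `S` -/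
  essSurj : ∀ Y : D, Y ∈ S → ∃ X : BddCat H, Nonempty (F.obj X ≅ Y)
  /-- `F` extends the inclusion `ι` of `H` -/
  extends_incl : bddSingle H ⋙ F ≅ ι

section Algebra

/-- A ring `Γ` has global dimension at most `d`. -/
def RingGlobalDimLE (Γ : Type u) [Ring Γ] (d : ℕ) : Prop :=
  letI : HasDerivedCategory (ModuleCat.{u} Γ) := HasDerivedCategory.standard _
  HasGlobalDimensionLE (ModuleCat.{u} Γ) d

/-- The category `mod Λ` of finite-dimensional (equivalently, finitely generated) right
modules over a finite-dimensional algebra `Λ`, i.e. finitely generated left modules over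
`Λᵐᵒᵖ`. -/
abbrev ModA (Λ : Type u) [Ring Λ] := FGModuleCat Λᵐᵒᵖ

/-- A finite-dimensional algebra is hereditary if the category of its right modules is
hereditary, i.e. if `Λ` has right global dimension at most 1. -/
def HereditaryAlg (Λ : Type u) [Ring Λ] : Prop := RingGlobalDimLE Λᵐᵒᵖ 1

end Algebra

end Paper

namespace Paper

/-- Composite of a chain of morphisms `Z 0 ⟶ Z 1 ⟶ ⋯ ⟶ Z n`. -/
def chainComp {D : Type u} [Category.{v} D] (Z : ℕ → D) (g : ∀ i : ℕ, Z i ⟶ Z (i + 1)) :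
    ∀ n : ℕ, Z 0 ⟶ Z n
  | 0 => 𝟙 (Z 0)
  | n + 1 => chainComp Z g n ≫ g n

variable (A : Type u) [Category.{v} A] [Abelian A] [HasDerivedCategory.{w} A]

/-- The aisle of the standard t-structure on `D^b(A)`: bounded complexes with vanishing
cohomology in positive degrees. -/
def stdAisle : Set (DerivedCategory A) :=
  {X | X ∈ Bdd A ∧ ∀ n : ℤ, 0 < n → IsZero ((DerivedCategory.homologyFunctor A n).obj X)}

/-- The coaisle of the standard t-structure on `D^b(A)`: bounded complexes with vanishing
cohomology in negative degrees. -/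
def stdCoaisle : Set (DerivedCategory A) :=
  {X | X ∈ Bdd A ∧ ∀ n : ℤ, n < 0 → IsZero ((DerivedCategory.homologyFunctor A n).obj X)}

end Paper

/-!
A short exact sequence of the heart is a distinguished triangle with all three terms in the heart.
The fibre `K` of an epimorphism `e : E → A` of the heart lies in the heart: `K[1]` is an extension
of `E[1]` by `A`, hence lies in the aisle, and a map from `K[1]` to the coaisle factors through
`H⁰` of its target, where the epimorphism `e` kills it. Thus `e ≫ f = 0` says that `f` factors
through the connecting map `A → K[1]`. Conversely, `p : A → A₁[1]` is the connecting map of an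
extension `A₁ → K → A` in the heart, and the epimorphism `K → A` kills `p`. Part (ii) is dual,
with the cone of a monomorphism `B → E`, shifted by `n - 1`.
-/

namespace Paper

section

variable {C : Type u} [Category.{v} C] [HasZeroObject C] [Preadditive C] [HasShift C ℤ]
  [∀ n : ℤ, (shiftFunctor C n).Additive] [Pretriangulated C]

structure IsStableUnderShiftAndExtensions (S : Set C) : Prop where
  shift_mem : ∀ ⦃X : C⦄, X ∈ S → ∀ m : ℤ, X⟦m⟧ ∈ S
  ext_mem : ∀ T ∈ distTriang C, T.obj₁ ∈ S → T.obj₃ ∈ S → T.obj₂ ∈ S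

lemma coyoneda_exact₁_shift (T : Triangle C) (hT : T ∈ distTriang C) (n : ℤ) {X : C}
    (f : X ⟶ T.obj₁⟦n⟧) (hf : f ≫ T.mor₁⟦n⟧' = 0) :
    ∃ p : X ⟶ T.obj₃⟦n - 1⟧,
      f = p ≫ T.mor₃⟦n - 1⟧' ≫ (shiftFunctorAdd' C 1 (n - 1) n (by omega)).inv.app T.obj₁ := by
  let ι := shiftFunctorAdd' C 1 (n - 1) n (by omega)
  let ε := (shiftFunctorCompIsoId C (1 - n) (n - 1) (by omega)).app X
  obtain ⟨f', hf'⟩ := (shiftFunctor C (n - 1)).map_surjective (ε.hom ≫ f ≫ ι.hom.app T.obj₁)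
  have hf'₁ : f' ≫ T.mor₁⟦1⟧' = 0 := (shiftFunctor C (n - 1)).map_injective (by
    have := ι.hom.naturality T.mor₁
    dsimp at this
    rw [Functor.map_comp, hf', Category.assoc, Category.assoc, ← this, reassoc_of% hf]
    simp)
  obtain ⟨p, rfl⟩ := Triangle.coyoneda_exact₁ T hT f' hf'₁
  refine ⟨ε.inv ≫ p⟦n - 1⟧', ?_⟩
  rw [Category.assoc, ← Functor.map_comp_assoc, hf']
  simp [ι]

namespace TStructureOn

variable {S : Set C} (t : TStructureOn C S)

lemma hom_eq_zero_of_shift_mem_V {P Q : C} (hP : P ∈ t.U) (hQ : Q⟦(1 : ℤ)⟧ ∈ t.V) (g : P ⟶ Q) :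
    g = 0 :=
  (shiftFunctor C (1 : ℤ)).map_injective (by rw [Functor.map_zero]; exact t.hom_zero hP hQ _)

lemma hom_shift_neg_one_eq_zero {P Q : C} (hP : P ∈ t.U) (hQ : Q ∈ t.V) (g : P ⟶ Q⟦(-1 : ℤ)⟧) :
    g = 0 :=
  t.hom_eq_zero_of_shift_mem_V hP
    (t.V_iso ((shiftFunctorCompIsoId C (-1 : ℤ) 1 (by omega)).symm.app Q) hQ) g

lemma mem_V_of_shift_mem_V {Q : C} (hQ : Q⟦(1 : ℤ)⟧ ∈ t.V) : Q ∈ t.V :=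
  t.V_iso ((shiftFunctorCompIsoId C (1 : ℤ) (-1) (by omega)).app Q) (t.V_shift hQ)

lemma mem_U_of_forall_shift_hom_eq_zero {E : C} (hE : E ∈ S)
    (h : ∀ N ∈ t.V, ∀ g : E⟦(1 : ℤ)⟧ ⟶ N, g = 0) : E ∈ t.U := by
  obtain ⟨X, Y, hX, hY, a, b, c, hT⟩ := t.exists_triangle E hE
  have hb : b = 0 :=
    (shiftFunctor C (1 : ℤ)).map_injective (by rw [Functor.map_zero]; exact h _ hY _)
  have hY₀ : IsZero Y := by
    obtain ⟨ψ, hψ⟩ := Triangle.yoneda_exact₂ _ (rot_of_distTriang _ hT) (𝟙 Y)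
      (show b ≫ 𝟙 Y = 0 by rw [hb, zero_comp])
    obtain rfl := t.hom_eq_zero_of_shift_mem_V (t.U_shift hX) hY ψ
    rw [IsZero.iff_id_eq_zero, hψ]
    exact comp_zero
  have : IsIso a := (Triangle.isZero₃_iff_isIso₁ _ hT).1 hY₀
  exact t.U_iso (asIso a) hX

lemma mem_V_of_forall_hom_shift_eq_zero (hS : IsStableUnderShiftAndExtensions S) {E : C}
    (hE : E ∈ S) (h : ∀ P ∈ t.U, ∀ g : P ⟶ E⟦(-1 : ℤ)⟧, g = 0) : E ∈ t.V := by
  obtain ⟨X, Y, hX, hY, a, b, c, hT⟩ := t.exists_triangle _ (hS.shift_mem hE (-1))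
  have hX₀ : IsZero X := by
    obtain ⟨ψ, hψ⟩ := Triangle.coyoneda_exact₂ _ (inv_rot_of_distTriang _ hT) (𝟙 X)
      (show 𝟙 X ≫ a = 0 by rw [h X hX a, comp_zero])
    obtain rfl := t.hom_shift_neg_one_eq_zero hX (t.mem_V_of_shift_mem_V hY) ψ
    rw [IsZero.iff_id_eq_zero, hψ]
    exact zero_comp
  have : IsIso b := (Triangle.isZero₁_iff_isIso₂ _ hT).1 hX₀
  exact t.V_iso ((shiftFunctor C (1 : ℤ)).mapIso (asIso b).symm ≪≫
    (shiftFunctorCompIsoId C (-1 : ℤ) 1 (by omega)).app E) hY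

lemma mem_U_of_distTriang (hS : IsStableUnderShiftAndExtensions S) (T : Triangle C)
    (hT : T ∈ distTriang C) (h₁ : T.obj₁ ∈ t.U) (h₃ : T.obj₃ ∈ t.U) : T.obj₂ ∈ t.U := by
  refine t.mem_U_of_forall_shift_hom_eq_zero
    (hS.ext_mem T hT (t.U_subset h₁) (t.U_subset h₃)) fun N hN g => ?_
  obtain ⟨g', rfl⟩ :=
    Triangle.yoneda_exact₂ _ (Triangle.shift_distinguished T hT 1) g (t.hom_zero h₁ hN _)
  obtain rfl := t.hom_zero h₃ hN g'
  exact comp_zero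

lemma mem_V_of_distTriang (hS : IsStableUnderShiftAndExtensions S) (T : Triangle C)
    (hT : T ∈ distTriang C) (h₁ : T.obj₁ ∈ t.V) (h₃ : T.obj₃ ∈ t.V) : T.obj₂ ∈ t.V := by
  refine t.mem_V_of_forall_hom_shift_eq_zero hS
    (hS.ext_mem T hT (t.V_subset h₁) (t.V_subset h₃)) fun P hP g => ?_
  obtain ⟨g', rfl⟩ := Triangle.coyoneda_exact₂ _ (Triangle.shift_distinguished T hT (-1)) g
    (t.hom_shift_neg_one_eq_zero hP h₃ _)
  obtain rfl := t.hom_shift_neg_one_eq_zero hP h₁ g'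
  exact zero_comp

lemma mem_heartSet_of_distTriang (hS : IsStableUnderShiftAndExtensions S) (T : Triangle C)
    (hT : T ∈ distTriang C) (h₁ : T.obj₁ ∈ t.heartSet) (h₃ : T.obj₃ ∈ t.heartSet) :
    T.obj₂ ∈ t.heartSet :=
  ⟨t.mem_U_of_distTriang hS T hT h₁.1 h₃.1, t.mem_V_of_distTriang hS T hT h₁.2 h₃.2⟩

lemma exists_heart_lift_of_mem_V (hS : IsStableUnderShiftAndExtensions S) {N : C}
    (hN : N ∈ t.V) :
    ∃ (H : t.Heart) (a : H.obj ⟶ N),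
      ∀ M ∈ t.U, ∀ φ : M ⟶ N, ∃ φ' : M ⟶ H.obj, φ' ≫ a = φ := by
  obtain ⟨H, N', hH, hN', a, b, c, hT⟩ := t.exists_triangle N (t.V_subset hN)
  have hHV : H ∈ t.V := t.mem_V_of_distTriang hS _ (inv_rot_of_distTriang _ hT)
    (t.V_shift (t.mem_V_of_shift_mem_V hN')) hN
  have hHH : H ∈ t.heartSet := ⟨hH, hHV⟩
  refine ⟨⟨H, hHH⟩, a, fun M hM φ => ?_⟩
  obtain ⟨φ', hφ'⟩ := Triangle.coyoneda_exact₂ _ hT φ (t.hom_eq_zero_of_shift_mem_V hM hN' _)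
  exact ⟨φ', hφ'.symm⟩

lemma exists_heart_desc_of_mem_U (hS : IsStableUnderShiftAndExtensions S) {P : C}
    (hP : P ∈ t.U) :
    ∃ (H : t.Heart) (b : P ⟶ H.obj),
      ∀ N ∈ t.V, ∀ φ : P ⟶ N, ∃ φ' : H.obj ⟶ N, b ≫ φ' = φ := by
  -- truncating `P[-1]` in degree `0` truncates `P` in degree `-1`, so `H = Y[1]` is `H⁰(P)`
  obtain ⟨X, Y, hX, hY, a, b, c, hT⟩ := t.exists_triangle _ (hS.shift_mem (t.U_subset hP) (-1))
  let e := (shiftFunctorCompIsoId C (-1 : ℤ) 1 (by omega)).app P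
  have hT₁ := Triangle.shift_distinguished _ hT 1
  have hYU : Y⟦(1 : ℤ)⟧ ∈ t.U := t.mem_U_of_distTriang hS _ (rot_of_distTriang _ hT₁)
    (t.U_iso e.symm hP) (t.U_shift (t.U_shift hX))
  have hYH : Y⟦(1 : ℤ)⟧ ∈ t.heartSet := ⟨hYU, hY⟩
  refine ⟨⟨Y⟦(1 : ℤ)⟧, hYH⟩, e.inv ≫ ((CategoryTheory.shiftFunctor (Triangle C) (1 : ℤ)).obj
    (Triangle.mk a b c)).mor₂, fun N hN φ => ?_⟩
  obtain ⟨φ', hφ'⟩ := Triangle.yoneda_exact₂ _ hT₁ (e.hom ≫ φ) (t.hom_zero hX hN _)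
  exact ⟨φ', (Category.assoc _ _ _).trans ((congrArg (e.inv ≫ ·) hφ'.symm).trans
    (e.inv_hom_id_assoc φ))⟩

lemma eq_zero_of_epi_comp {P Q R : t.Heart} (e : P ⟶ Q) [Epi e] {g : Q.obj ⟶ R.obj}
    (hg : e.hom ≫ g = 0) : g = 0 :=
  congrArg InducedCategory.Hom.hom
    (zero_of_epi_comp e (ObjectProperty.hom_ext _ hg : e ≫ ObjectProperty.homMk g = 0))

lemma eq_zero_of_comp_mono {P Q R : t.Heart} (m : Q ⟶ R) [Mono m] {g : P.obj ⟶ Q.obj}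
    (hg : g ≫ m.hom = 0) : g = 0 :=
  congrArg InducedCategory.Hom.hom
    (zero_of_comp_mono m (ObjectProperty.hom_ext _ hg : ObjectProperty.homMk g ≫ m = 0))

lemma epi_homMk_of_distTriang {A : C} (hA : A ∈ t.U) {K X : t.Heart} {k : A ⟶ K.obj}
    {e : K.obj ⟶ X.obj} {p : X.obj ⟶ A⟦(1 : ℤ)⟧} (hT : Triangle.mk k e p ∈ distTriang C) :
    Epi (ObjectProperty.homMk e : K ⟶ X) :=
  Preadditive.epi_of_cancel_zero _ fun {Z} g hg => by
    obtain ⟨ψ, hψ⟩ := Triangle.yoneda_exact₃ _ hT g.hom (congrArg InducedCategory.Hom.hom hg)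
    obtain rfl := t.hom_zero hA Z.property.2 ψ
    exact ObjectProperty.hom_ext _ (hψ.trans comp_zero)

lemma mono_homMk_of_distTriang {A : C} (hA : A ∈ t.V) {Y K : t.Heart} {m : Y.obj ⟶ K.obj}
    {g : K.obj ⟶ A} {q : A ⟶ Y.obj⟦(1 : ℤ)⟧} (hT : Triangle.mk m g q ∈ distTriang C) :
    Mono (ObjectProperty.homMk m : Y ⟶ K) :=
  Preadditive.mono_of_cancel_zero _ fun {Z} h hh => by
    obtain ⟨ψ, hψ⟩ := Triangle.coyoneda_exact₂ _ (inv_rot_of_distTriang _ hT) h.hom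
      (congrArg InducedCategory.Hom.hom hh)
    obtain rfl := t.hom_shift_neg_one_eq_zero Z.property.1 hA ψ
    exact ObjectProperty.hom_ext _ (hψ.trans zero_comp)

lemma mem_heartSet_of_epi (hS : IsStableUnderShiftAndExtensions S) {C' X : t.Heart}
    (e : C' ⟶ X) [Epi e] {K : C} {k : K ⟶ C'.obj} {h : X.obj ⟶ K⟦(1 : ℤ)⟧}
    (hT : Triangle.mk k e.hom h ∈ distTriang C) : K ∈ t.heartSet := by
  have hKV : K ∈ t.V := t.mem_V_of_distTriang hS _ (inv_rot_of_distTriang _ hT)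
    (t.V_shift X.property.2) C'.property.2
  have hK₁U : K⟦(1 : ℤ)⟧ ∈ t.U := t.mem_U_of_distTriang hS _
    (rot_of_distTriang _ (rot_of_distTriang _ hT)) X.property.1 (t.U_shift C'.property.1)
  refine ⟨t.mem_U_of_forall_shift_hom_eq_zero (t.V_subset hKV) fun N hN φ => ?_, hKV⟩
  obtain ⟨H, a, ha⟩ := t.exists_heart_lift_of_mem_V hS hN
  obtain ⟨φ', rfl⟩ := ha _ hK₁U φ
  have hφ' : h ≫ φ' = 0 := t.eq_zero_of_epi_comp e (R := H)
    (by rw [← Category.assoc, show e.hom ≫ h = 0 from comp_distTriang_mor_zero₂₃ _ hT, zero_comp])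
  obtain ⟨ξ, rfl⟩ := Triangle.yoneda_exact₃ _ (rot_of_distTriang _ hT) φ' hφ'
  obtain rfl := t.hom_zero C'.property.1 H.property.2 ξ
  exact (congrArg (· ≫ a) comp_zero).trans zero_comp

lemma mem_heartSet_of_mono (hS : IsStableUnderShiftAndExtensions S) {Y C' : t.Heart}
    (m : Y ⟶ C') [Mono m] {Q : C} {v : C'.obj ⟶ Q} {u : Q ⟶ Y.obj⟦(1 : ℤ)⟧}
    (hT : Triangle.mk m.hom v u ∈ distTriang C) : Q ∈ t.heartSet := by
  have hQU : Q ∈ t.U := t.mem_U_of_distTriang hS _ (rot_of_distTriang _ hT)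
    C'.property.1 (t.U_shift Y.property.1)
  have hQ₁V : Q⟦(-1 : ℤ)⟧ ∈ t.V := t.mem_V_of_distTriang hS _
    (inv_rot_of_distTriang _ (inv_rot_of_distTriang _ hT)) (t.V_shift C'.property.2) Y.property.2
  refine ⟨hQU, t.mem_V_of_forall_hom_shift_eq_zero hS (t.U_subset hQU) fun P hP φ => ?_⟩
  obtain ⟨H, b, hb⟩ := t.exists_heart_desc_of_mem_U hS hP
  obtain ⟨φ', rfl⟩ := hb _ hQ₁V φ
  have hφ' : φ' ≫ (Triangle.mk m.hom v u).invRotate.mor₁ = 0 := t.eq_zero_of_comp_mono m (P := H)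
    ((Category.assoc _ _ _).trans ((congrArg (φ' ≫ ·)
      (comp_distTriang_mor_zero₁₂ _ (inv_rot_of_distTriang _ hT))).trans comp_zero))
  obtain ⟨ξ, rfl⟩ := Triangle.coyoneda_exact₂ _
    (inv_rot_of_distTriang _ (inv_rot_of_distTriang _ hT)) φ' hφ'
  obtain rfl := t.hom_shift_neg_one_eq_zero H.property.1 C'.property.2 ξ
  exact (congrArg (b ≫ ·) zero_comp).trans comp_zero

lemma exists_factorization_of_epi (hS : IsStableUnderShiftAndExtensions S) {C' X : t.Heart}
    (e : C' ⟶ X) [Epi e] {W : C} (f : X.obj ⟶ W) (hf : e.hom ≫ f = 0) :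
    ∃ (A₁ : t.Heart) (p : X.obj ⟶ A₁.obj⟦(1 : ℤ)⟧) (q : A₁.obj⟦(1 : ℤ)⟧ ⟶ W), p ≫ q = f := by
  obtain ⟨K, k, h, hT⟩ := distinguished_cocone_triangle₁ e.hom
  obtain ⟨q, hq⟩ := Triangle.yoneda_exact₃ _ hT f hf
  exact ⟨⟨K, t.mem_heartSet_of_epi hS e hT⟩, h, q, hq.symm⟩

lemma exists_epi_comp_eq_zero (hS : IsStableUnderShiftAndExtensions S) {X A₁ : t.Heart}
    (p : X.obj ⟶ A₁.obj⟦(1 : ℤ)⟧) : ∃ (C' : t.Heart) (e : C' ⟶ X), Epi e ∧ e.hom ≫ p = 0 := by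
  obtain ⟨K, k, e, hT⟩ := distinguished_cocone_triangle₂ p
  let K' : t.Heart := ⟨K, t.mem_heartSet_of_distTriang hS _ hT A₁.property X.property⟩
  exact ⟨K', ObjectProperty.homMk e, t.epi_homMk_of_distTriang A₁.property.1 (K := K') hT,
    comp_distTriang_mor_zero₂₃ _ hT⟩

lemma exists_factorization_of_mono (hS : IsStableUnderShiftAndExtensions S) {Y C' : t.Heart}
    (m : Y ⟶ C') [Mono m] (n : ℤ) {X : C} (f : X ⟶ Y.obj⟦n⟧) (hf : f ≫ m.hom⟦n⟧' = 0) :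
    ∃ (A' : t.Heart) (p : X ⟶ A'.obj⟦n - 1⟧) (q : A'.obj⟦n - 1⟧ ⟶ Y.obj⟦n⟧), p ≫ q = f := by
  obtain ⟨Q, v, u, hT⟩ := distinguished_cocone_triangle m.hom
  obtain ⟨p, hp⟩ := coyoneda_exact₁_shift _ hT n f hf
  exact ⟨⟨Q, t.mem_heartSet_of_mono hS m hT⟩, p, _, hp.symm⟩

lemma exists_mono_shift_comp_eq_zero (hS : IsStableUnderShiftAndExtensions S) {A' Y : t.Heart}
    (n : ℤ) (q : A'.obj⟦n - 1⟧ ⟶ Y.obj⟦n⟧) :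
    ∃ (C' : t.Heart) (m : Y ⟶ C'), Mono m ∧ q ≫ m.hom⟦n⟧' = 0 := by
  let ι := shiftFunctorAdd' C 1 (n - 1) n (by omega)
  obtain ⟨q', hq'⟩ := (shiftFunctor C (n - 1)).map_surjective (q ≫ ι.hom.app Y.obj)
  obtain ⟨K, m, g, hT⟩ := distinguished_cocone_triangle₂ q'
  let K' : t.Heart := ⟨K, t.mem_heartSet_of_distTriang hS _ hT Y.property A'.property⟩
  refine ⟨K', ObjectProperty.homMk m, t.mono_homMk_of_distTriang A'.property.2 (K := K') hT, ?_⟩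
  have hq'm : q' ≫ m⟦(1 : ℤ)⟧' = 0 := comp_distTriang_mor_zero₃₁ _ hT
  rw [← cancel_mono (ι.hom.app K), zero_comp, Category.assoc]
  have := ι.hom.naturality m
  dsimp at this ⊢
  rw [this, ← Category.assoc, ← hq', ← Functor.map_comp, hq'm, Functor.map_zero]

end TStructureOn

lemma isStableUnderShiftAndExtensions_bdd (A : Type u) [Category.{v} A] [Abelian A]
    [HasDerivedCategory.{w} A] : IsStableUnderShiftAndExtensions (Bdd A) where
  shift_mem _ hX m := shift_mem_Bdd A hX m
  ext_mem T hT := by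
    rintro ⟨a₁, b₁, h₁⟩ ⟨a₃, b₃, h₃⟩
    refine ⟨min a₁ a₃, max b₁ b₃, fun n hn => ?_⟩
    exact ((DerivedCategory.homologyFunctor A n).map_distinguished_exact _ hT).isZero_of_both_zeros
      ((h₁ n (by omega)).eq_of_src _ _) ((h₃ n (by omega)).eq_of_tgt _ _)

end

end Paper

open Paper in
theorem epi_mono_killing_iff_factorization_general
    (A : Type u) [Category.{v} A] [Abelian A] [HasDerivedCategory.{w} A]
    (t : TStructureOn (DerivedCategory A) (Bdd A))
    (X Y : t.Heart) (n : ℤ) (f : X.obj ⟶ Y.obj⟦n⟧) :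
    ((∃ (C : t.Heart) (e : C ⟶ X), Epi e ∧ e.hom ≫ f = 0) ↔
      (∃ (A₁ : t.Heart) (p : X.obj ⟶ A₁.obj⟦(1 : ℤ)⟧) (q : A₁.obj⟦(1 : ℤ)⟧ ⟶ Y.obj⟦n⟧),
        p ≫ q = f)) ∧
    ((∃ (C : t.Heart) (m : Y ⟶ C), Mono m ∧
        f ≫ m.hom⟦n⟧' = 0) ↔
      (∃ (A' : t.Heart) (p : X.obj ⟶ A'.obj⟦n - 1⟧) (q : A'.obj⟦n - 1⟧ ⟶ Y.obj⟦n⟧),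
        p ≫ q = f)) := by
  have hS := isStableUnderShiftAndExtensions_bdd A
  refine ⟨⟨fun ⟨_, e, _, hef⟩ => t.exists_factorization_of_epi hS e f hef, ?_⟩,
    ⟨fun ⟨_, m, _, hmf⟩ => t.exists_factorization_of_mono hS m n f hmf, ?_⟩⟩
  · rintro ⟨A₁, p, q, rfl⟩
    obtain ⟨C, e, he, hep⟩ := t.exists_epi_comp_eq_zero hS p
    exact ⟨C, e, he, by rw [← Category.assoc, hep, zero_comp]⟩
  · rintro ⟨A', p, q, rfl⟩
    obtain ⟨C, m, hm, hqm⟩ := t.exists_mono_shift_comp_eq_zero hS n q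
    exact ⟨C, m, hm, by rw [Category.assoc, hqm, comp_zero]⟩

open Paper in
/-- For `A, B` in the heart of a t-structure on `D^b(A)` and
`f : A → B[n]` with `n ≥ 2`: (i) there is an epimorphism `C → A` in the heart killing `f`
iff `f` factors through some `A₁[1]` with `A₁` in the heart; and (ii) there is a
monomorphism `B → C` in the heart killing `f` iff `f` factors through some
`A_{n-1}[n-1]` with `A_{n-1}` in the heart. -/
theorem epi_mono_killing_iff_factorization
    (A : Type u) [Category.{v} A] [Abelian A] [HasDerivedCategory.{w} A]
    (t : TStructureOn (DerivedCategory A) (Bdd A))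
    (X Y : t.Heart) (n : ℤ) (hn : 2 ≤ n) (f : X.obj ⟶ Y.obj⟦n⟧) :
    ((∃ (C : t.Heart) (e : C ⟶ X), Epi e ∧ e.hom ≫ f = 0) ↔
      (∃ (A₁ : t.Heart) (p : X.obj ⟶ A₁.obj⟦(1 : ℤ)⟧) (q : A₁.obj⟦(1 : ℤ)⟧ ⟶ Y.obj⟦n⟧),
        p ≫ q = f)) ∧
    ((∃ (C : t.Heart) (m : Y ⟶ C), Mono m ∧
        f ≫ m.hom⟦n⟧' = 0) ↔
      (∃ (A' : t.Heart) (p : X.obj ⟶ A'.obj⟦n - 1⟧) (q : A'.obj⟦n - 1⟧ ⟶ Y.obj⟦n⟧),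
        p ≫ q = f)) :=
  epi_mono_killing_iff_factorization_general A t X Y n f
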